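/- Let a₁, a₂ be continuous real functions on an interval containing t₀, set A₁(t) = ∫_{t₀}^t a₁(s) ds, and suppose cos(2A₁(t)) ≠ 0 and a₃(t) = a₂(t)·tan(2A₁(t)). Then q(t) := exp(i·A₁(t))·exp(j·θ₂(t)), with θ₂(t) = ∫_{t₀}^t a₂(s)/cos(2A₁(s)) ds, satisfies q'(t) = (a₁(t)i + a₂(t)j + a₃(t)k)q(t) and q(t₀) = 1. -/

import Mathlib

/-!
Both factors solve linear equations: `(exp(iA))' = A' i exp(iA)` and `(exp(jθ))' = θ' j exp(jθ)`.
Moving `j` to the left of `exp(iA)` rotates it, `exp(iA) j = (cos 2A j + sin 2A k) exp(iA)`, so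
`q' = (A' i + θ' (cos 2A j + sin 2A k)) q`, and `θ' = a₂ / cos 2A` turns the bracket into
`a₁ i + a₂ j + a₂ tan 2A k`.
-/

noncomputable def qi : Quaternion ℝ := ⟨0, 1, 0, 0⟩
noncomputable def qj : Quaternion ℝ := ⟨0, 0, 1, 0⟩
noncomputable def qk : Quaternion ℝ := ⟨0, 0, 0, 1⟩

noncomputable def expI (θ : ℝ) : Quaternion ℝ := ⟨Real.cos θ, Real.sin θ, 0, 0⟩
noncomputable def expJ (θ : ℝ) : Quaternion ℝ := ⟨Real.cos θ, 0, Real.sin θ, 0⟩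

theorem hasDerivAt_integral_of_continuousOn {S : Set ℝ} (hSopen : IsOpen S)
    (hSconn : S.OrdConnected) {f : ℝ → ℝ} (hf : ContinuousOn f S) {t₀ t : ℝ}
    (ht₀ : t₀ ∈ S) (ht : t ∈ S) :
    HasDerivAt (fun u => ∫ s in t₀..u, f s) (f t) t :=
  intervalIntegral.integral_hasDerivAt_right
    ((hf.mono (hSconn.uIcc_subset ht₀ ht)).intervalIntegrable)
    (hf.stronglyMeasurableAtFilter hSopen t ht)
    (hf.continuousAt (hSopen.mem_nhds ht))

theorem hasDerivAt_cos_smul_one_add_sin_smul {𝔸 : Type*} [NormedRing 𝔸] [NormedAlgebra ℝ 𝔸]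
    {u : 𝔸} (hu : u * u = -1) (θ : ℝ) :
    HasDerivAt (fun θ => Real.cos θ • (1 : 𝔸) + Real.sin θ • u)
      (u * (Real.cos θ • (1 : 𝔸) + Real.sin θ • u)) θ := by
  refine ((Real.hasDerivAt_cos θ).smul_const 1).add ((Real.hasDerivAt_sin θ).smul_const u)
    |>.congr_deriv ?_
  rw [mul_add, mul_smul_comm, mul_smul_comm, hu, mul_one, smul_neg, neg_smul]
  abel

open scoped Quaternion

-- The quaternion operations are expanded componentwise before the definitions are unfolded:
-- on the unfolded `⟨_, _, _, _⟩` terms the `Quaternion` projection lemmas no longer apply.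
theorem expI_eq (θ : ℝ) : expI θ = Real.cos θ • (1 : ℍ[ℝ]) + Real.sin θ • qi := by
  ext <;> simp <;> simp [expI, qi]

theorem expJ_eq (θ : ℝ) : expJ θ = Real.cos θ • (1 : ℍ[ℝ]) + Real.sin θ • qj := by
  ext <;> simp <;> simp [expJ, qj]

theorem qi_mul_qi : qi * qi = -1 := by
  ext <;> simp <;> simp [qi]

theorem qj_mul_qj : qj * qj = -1 := by
  ext <;> simp <;> simp [qj]

theorem expI_zero : expI 0 = 1 := by simp [expI_eq]

theorem expJ_zero : expJ 0 = 1 := by simp [expJ_eq]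

theorem hasDerivAt_expI (θ : ℝ) : HasDerivAt expI (qi * expI θ) θ := by
  simpa only [← expI_eq] using hasDerivAt_cos_smul_one_add_sin_smul qi_mul_qi θ

theorem hasDerivAt_expJ (θ : ℝ) : HasDerivAt expJ (qj * expJ θ) θ := by
  simpa only [← expJ_eq] using hasDerivAt_cos_smul_one_add_sin_smul qj_mul_qj θ

theorem expI_mul_qj (θ : ℝ) :
    expI θ * qj = (Real.cos (2 * θ) • qj + Real.sin (2 * θ) • qk) * expI θ := by
  ext <;> simp <;> simp [expI, qj, qk, Real.cos_two_mul, Real.sin_two_mul]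
  · linear_combination (-2 * Real.cos θ) * Real.sin_sq_add_cos_sq θ
  · ring

theorem HasDerivAt.expI_mul_expJ {A θ : ℝ → ℝ} {a b t : ℝ} (hA : HasDerivAt A a t)
    (hθ : HasDerivAt θ b t) :
    HasDerivAt (fun s => expI (A s) * expJ (θ s))
      ((a • qi + b • (Real.cos (2 * A t) • qj + Real.sin (2 * A t) • qk)) *
        (expI (A t) * expJ (θ t))) t := by
  refine ((hasDerivAt_expI (A t)).scomp t hA).mul ((hasDerivAt_expJ (θ t)).scomp t hθ)
    |>.congr_deriv ?_
  change a • (qi * expI (A t)) * expJ (θ t) + expI (A t) * b • (qj * expJ (θ t)) = _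
  rw [mul_smul_comm, ← mul_assoc, expI_mul_qj]
  simp only [add_mul, smul_mul_assoc, mul_assoc]

theorem caseIII_exact_solution
    (S : Set ℝ) (hSopen : IsOpen S) (hSconn : S.OrdConnected)
    (t₀ : ℝ) (ht₀ : t₀ ∈ S)
    (a₁ a₂ a₃ : ℝ → ℝ)
    (ha₁ : ContinuousOn a₁ S) (ha₂ : ContinuousOn a₂ S)
    (A₁ θ₂ : ℝ → ℝ)
    (hA₁ : ∀ t, A₁ t = ∫ s in t₀..t, a₁ s)
    (hcos : ∀ t ∈ S, Real.cos (2 * A₁ t) ≠ 0)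
    (ha₃ : ∀ t ∈ S, a₃ t = a₂ t * Real.tan (2 * A₁ t))
    (hθ₂ : ∀ t, θ₂ t = ∫ s in t₀..t, a₂ s / Real.cos (2 * A₁ s)) :
    (∀ t ∈ S, HasDerivAt (fun s => expI (A₁ s) * expJ (θ₂ s))
        ((a₁ t • qi + a₂ t • qj + a₃ t • qk) * (expI (A₁ t) * expJ (θ₂ t))) t) ∧
      expI (A₁ t₀) * expJ (θ₂ t₀) = 1 := by
  have hA : ∀ t ∈ S, HasDerivAt A₁ (a₁ t) t := fun t ht => by
    simpa only [← hA₁] using hasDerivAt_integral_of_continuousOn hSopen hSconn ha₁ ht₀ ht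
  have hA_cont : ContinuousOn A₁ S := fun t ht => (hA t ht).continuousAt.continuousWithinAt
  have hθ_integrand : ContinuousOn (fun s => a₂ s / Real.cos (2 * A₁ s)) S :=
    ha₂.div (by fun_prop) hcos
  have hθ : ∀ t ∈ S, HasDerivAt θ₂ (a₂ t / Real.cos (2 * A₁ t)) t := fun t ht => by
    simpa only [← hθ₂] using
      hasDerivAt_integral_of_continuousOn hSopen hSconn hθ_integrand ht₀ ht
  refine ⟨fun t ht => (hA t ht).expI_mul_expJ (hθ t ht) |>.congr_deriv ?_, ?_⟩
  · rw [smul_add, smul_smul, smul_smul, div_mul_cancel₀ _ (hcos t ht), ha₃ t ht,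
      Real.tan_eq_sin_div_cos, div_mul_eq_mul_div, mul_div_assoc, add_assoc]
  · simp [hA₁, hθ₂, expI_zero, expJ_zero]
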